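/- arXiv:2203.03427 — 6 statements merged into one kernel-verified Lean document; each statement's English description precedes it below -/
import Mathlib

section
/- If G is a finite group possessing a proper non-trivial ICΦ-subgroup H, then G is not simple. -/
/-!
`[H, G]` is normal in `G`, so in a simple group it is trivial or everything. If it is trivial,
`H` is central, hence normal. If it is `G`, the `ICΦ` condition reads `H ≤ Φ(H)`, which is
impossible for a nontrivial finite group since `Φ(H)` lies in a maximal subgroup.
-/

/-- `H` is an `ICΦ`-subgroup of `G` if `H ∩ [H,G] ≤ Φ(H)`. -/
def IsICPhi {G : Type*} [Group G] (H : Subgroup G) : Prop :=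
  H ⊓ ⁅H, (⊤ : Subgroup G)⁆ ≤ (frattini ↥H).map H.subtype

namespace Subgroup

variable {G : Type*} [Group G]

theorem commutator_top_right_normal (H : Subgroup G) : ⁅H, (⊤ : Subgroup G)⁆.Normal :=
  normalizer_eq_top_iff.mp <| top_le_iff.mp <| normalizer_commutator_ge_right H ⊤

theorem normal_of_commutator_top_right_eq_bot {H : Subgroup G}
    (h : ⁅H, (⊤ : Subgroup G)⁆ = ⊥) : H.Normal :=
  commutator_top_right_le_iff.mp (h ▸ bot_le)

end Subgroup

theorem frattini_ne_top (G : Type*) [Group G] [Nontrivial G] [IsCoatomic (Subgroup G)] :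
    frattini G ≠ ⊤ := by
  obtain ⟨M, hM⟩ := IsCoatomic.exists_coatom (Subgroup G)
  exact ne_top_of_le_ne_top hM.1 (frattini_le_coatom hM)

theorem IsICPhi.frattini_eq_top_of_commutator_eq_top {G : Type*} [Group G] {H : Subgroup G}
    (hIC : IsICPhi H) (hN : ⁅H, (⊤ : Subgroup G)⁆ = ⊤) : frattini H = ⊤ := by
  have hH : H.subtype.range ≤ (frattini H).map H.subtype := by
    simpa [IsICPhi, hN, H.range_subtype] using hIC
  rwa [MonoidHom.range_eq_map, Subgroup.map_subtype_le_map_subtype, top_le_iff] at hH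

theorem stmt0 {G : Type*} [Group G] [Finite G] (H : Subgroup G)
    (hbot : H ≠ ⊥) (htop : H ≠ ⊤) (hIC : IsICPhi H) : ¬ IsSimpleGroup G := by
  intro hG
  rcases H.commutator_top_right_normal.eq_bot_or_eq_top with hN | hN
  · exact (Subgroup.normal_of_commutator_top_right_eq_bot hN).eq_bot_or_eq_top.elim hbot htop
  · have : Nontrivial H := H.nontrivial_iff_ne_bot.mpr hbot
    exact frattini_ne_top H (hIC.frattini_eq_top_of_commutator_eq_top hN)
end

section
/- Let G be a finite group and H an ICΦ-subgroup of G with G' ≤ H, where G' is the derived subgroup of G. Then G is nilpotent. -/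
section

open Subgroup

variable {G : Type*} [Group G]

/-- `Φ(N)` is characteristic in `N`, hence normal in `G`; if it missed a maximal subgroup `M`,
then `G = M Φ(N)` and Dedekind's law would give `N = (N ⊓ M) Φ(N)`, i.e. `N ≤ M`. -/
theorem map_subtype_frattini_le_frattini (N : Subgroup G) [N.Normal]
    [IsCoatomic (Subgroup N)] : (frattini N).map N.subtype ≤ frattini G := by
  set F := (frattini N).map N.subtype
  have hFN : F ≤ N := map_subtype_le _
  refine le_iInf₂ fun M hM => ?_
  by_contra hFM
  have hMF : M ⊔ F = ⊤ := hM.2 _ (left_lt_sup.mpr hFM)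
  have hgen : M.subgroupOf N ⊔ frattini N = ⊤ := by
    refine eq_top_iff.mpr fun h _ => ?_
    have hh : (h : G) ∈ M ⊔ F := hMF ▸ mem_top _
    rw [← SetLike.mem_coe, mul_normal] at hh
    obtain ⟨m, hm, f, ⟨f', hf', rfl⟩, hmf⟩ := hh
    have hmN : m ∈ N := by simpa [← hmf] using mul_mem h.2 (inv_mem f'.2)
    have : h = ⟨m, hmN⟩ * f' := Subtype.ext hmf.symm
    exact this ▸ mul_mem_sup (show (⟨m, hmN⟩ : N) ∈ M.subgroupOf N from hm) hf'
  have hNM : N ≤ M := subgroupOf_eq_top.mp (frattini_nongenerating hgen)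
  exact hFM (hFN.trans hNM)

theorem isNilpotent_quotient_of_lowerCentralSeries_le (N : Subgroup G) [N.Normal] {n : ℕ}
    (h : (⊤ : Subgroup G).lowerCentralSeries n ≤ N) : Group.IsNilpotent (G ⧸ N) := by
  rw [Subgroup.nilpotent_iff_lowerCentralSeries]
  refine ⟨n, ?_⟩
  rw [← map_top_of_surjective _ (QuotientGroup.mk'_surjective N), ← map_lowerCentralSeries,
    Subgroup.map_eq_bot_iff, QuotientGroup.ker_mk']
  exact h

/-- Gaschütz: a Sylow subgroup `P` of `G` has `PΦ(G)` normal, so the Frattini argument gives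
`N_G(P) Φ(G) = G`, whence `N_G(P) = G`. -/
theorem isNilpotent_of_isNilpotent_quotient_frattini [Finite G]
    (h : Group.IsNilpotent (G ⧸ frattini G)) : Group.IsNilpotent G := by
  have hsylow := (Group.isNilpotent_of_finite_tfae (G := G)).out 0 3
  have hsylowQuot := (Group.isNilpotent_of_finite_tfae (G := G ⧸ frattini G)).out 0 3
  rw [hsylow]
  rw [hsylowQuot] at h
  intro p hp P
  let π := QuotientGroup.mk' (frattini G)
  let Q := (P : Subgroup G).map π
  have : Q.Normal := h p hp (P.mapSurjective (QuotientGroup.mk'_surjective _))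
  have hQ : Q.comap π = (P : Subgroup G) ⊔ frattini G := by
    rw [comap_map_eq, QuotientGroup.ker_mk']
  have hP : (P : Subgroup G) ≤ Q.comap π := hQ ▸ le_sup_left
  have hfrattini := Sylow.normalizer_sup_eq_top' P hP
  rw [hQ, ← sup_assoc, ← P.coe_coe, sup_eq_left.mpr le_normalizer] at hfrattini
  exact normalizer_eq_top_iff.mp (frattini_nongenerating hfrattini)

end

theorem stmt1 {G : Type*} [Group G] [Finite G] (H : Subgroup G)
    (hIC : IsICPhi H) (hle : commutator G ≤ H) : Group.IsNilpotent G := by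
  have : H.Normal := Subgroup.Normal.of_commutator_le _ hle
  have hHG : ⁅H, ⊤⁆ ≤ frattini G := fun x hx =>
    map_subtype_frattini_le_frattini H (hIC ⟨Subgroup.commutator_top_right_le_iff.mpr ‹_› hx, hx⟩)
  have hG : (⊤ : Subgroup G).lowerCentralSeries 2 ≤ frattini G :=
    (Subgroup.commutator_mono hle le_rfl).trans hHG
  exact isNilpotent_of_isNilpotent_quotient_frattini
    (isNilpotent_quotient_of_lowerCentralSeries_le _ hG)
end

section
/- Let G be a finite group, H an ICΦ-subgroup of G, and N a normal subgroup of G with N ≤ H. Then H/N is an ICΦ-subgroup of G/N. -/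
theorem stmt3 {G : Type*} [Group G] [Finite G] (H N : Subgroup G) [N.Normal]
    (hIC : IsICPhi H) (hle : N ≤ H) :
    IsICPhi (H.map (QuotientGroup.mk' N)) := by
  set f := QuotientGroup.mk' N with hf
  have hsurj : Function.Surjective f := QuotientGroup.mk'_surjective N
  intro y hy
  obtain ⟨hy1, hy2⟩ := hy
  have hcomm : ⁅H.map f, (⊤ : Subgroup (G ⧸ N))⁆ = (⁅H, (⊤ : Subgroup G)⁆).map f := by
    rw [Subgroup.map_commutator, Subgroup.map_top_of_surjective f hsurj]
  rw [hcomm] at hy2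
  obtain ⟨k, hk, rfl⟩ := hy2
  have hkH : k ∈ H := by
    have h1 : k ∈ (H.map f).comap f := hy1
    rwa [Subgroup.comap_map_eq, QuotientGroup.ker_mk',
      sup_eq_left.mpr hle] at h1
  have hkF : (⟨k, hkH⟩ : ↥H) ∈ frattini ↥H := by
    obtain ⟨x, hx, hxe⟩ := hIC ⟨hkH, hk⟩
    have : x = (⟨k, hkH⟩ : ↥H) := Subtype.ext hxe
    rwa [← this]
  have hmem := frattini_le_comap_frattini_of_surjective
    (f.subgroupMap_surjective H) hkF
  exact ⟨f.subgroupMap H ⟨k, hkH⟩, hmem, rfl⟩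
end

section
/- Let p be a prime, G a finite group, H a p-subgroup of G that is an ICΦ-subgroup of G, and N a normal p'-subgroup of G (i.e., p does not divide |N|). Then HN/N is an ICΦ-subgroup of G/N. -/
/-!
Write `π : G → G/N` and `M = [H,G]`, a normal subgroup of `G`. Since `π` maps `[H,G]` onto
`[π H, G/N]` and any surjection maps `Φ(H)` into `Φ(π H)`, it suffices that an `h ∈ H` with
`π h ∈ π M`, i.e. `h ∈ MN`, already lies in `M`. In `G/M` the image of the `p`-group `H ∩ MN`
lies in the image of the `p'`-group `N`, hence is trivial.
-/

open scoped commutatorElement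

namespace Subgroup

variable {G : Type*} [Group G]

instance commutator_top_normal (H : Subgroup G) : ⁅H, (⊤ : Subgroup G)⁆.Normal := by
  rw [← normalizer_eq_top_iff, eq_top_iff, commutator_def, le_normalizer_closure_iff]
  rintro x - _ ⟨h, hh, g, -, rfl⟩
  have hconj : x * ⁅h, g⁆ * x⁻¹ = ⁅h, x⁆⁻¹ * ⁅h, x * g⁆ := by
    simp only [commutatorElement_def]; group
  rw [hconj]
  exact mul_mem (inv_mem (subset_closure ⟨h, hh, x, trivial, rfl⟩))
    (subset_closure ⟨h, hh, x * g, trivial, rfl⟩)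

end Subgroup

namespace IsPGroup

variable {G : Type*} [Group G] {p : ℕ} [hp : Fact p.Prime]

theorem disjoint_of_not_dvd_card {P N : Subgroup G} (hP : IsPGroup p P)
    (hN : ¬ p ∣ Nat.card N) : Disjoint P N := by
  refine Subgroup.disjoint_def.mpr fun {g} hgP hgN ↦ ?_
  obtain ⟨k, hk⟩ := hP ⟨g, hgP⟩
  have hdvd_pow : orderOf g ∣ p ^ k := Subgroup.orderOf_mk g hgP ▸ orderOf_dvd_of_pow_eq_one hk
  have hdvd_card : orderOf g ∣ Nat.card N := Subgroup.orderOf_mk g hgN ▸ orderOf_dvd_natCard _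
  have hcop : (p ^ k).Coprime (Nat.card N) := (hp.out.coprime_iff_not_dvd.mpr hN).pow_left k
  exact orderOf_eq_one_iff.mp (Nat.eq_one_of_dvd_coprimes hcop hdvd_pow hdvd_card)

theorem le_of_le_sup {P M N : Subgroup G} [M.Normal] (hP : IsPGroup p P)
    (hN : ¬ p ∣ Nat.card N) (hPMN : P ≤ M ⊔ N) : P ≤ M := by
  set q := QuotientGroup.mk' M
  have hMq : M.map q = ⊥ := by rw [Subgroup.map_eq_bot_iff, QuotientGroup.ker_mk']
  have hPq : P.map q ≤ N.map q := by
    simpa only [Subgroup.map_sup, hMq, bot_sup_eq] using Subgroup.map_mono (f := q) hPMN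
  have hNq : ¬ p ∣ Nat.card (N.map q) := fun h ↦ hN (h.trans (Subgroup.card_map_dvd N q))
  have hbot : P.map q = ⊥ := ((hP.map q).disjoint_of_not_dvd_card hNq).eq_bot_of_le hPq
  rwa [Subgroup.map_eq_bot_iff, QuotientGroup.ker_mk'] at hbot

end IsPGroup

theorem IsICPhi.map {G G' : Type*} [Group G] [Group G'] {H : Subgroup G} {f : G →* G'}
    (hf : Function.Surjective f) (hIC : IsICPhi H) (hker : H ⊓ (⁅H, ⊤⁆ ⊔ f.ker) ≤ ⁅H, ⊤⁆) :
    IsICPhi (H.map f) := by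
  intro x hx
  obtain ⟨⟨h, hh, rfl⟩, hcomm⟩ := Subgroup.mem_inf.mp hx
  rw [← Subgroup.map_top_of_surjective f hf, ← Subgroup.map_commutator, ← Subgroup.mem_comap,
    Subgroup.comap_map_eq] at hcomm
  obtain ⟨y, hy, rfl⟩ := hIC ⟨hh, hker ⟨hh, hcomm⟩⟩
  exact ⟨f.subgroupMap H y,
    frattini_le_comap_frattini_of_surjective (f.subgroupMap_surjective H) hy, rfl⟩

theorem stmt4_general {G : Type*} [Group G] (p : ℕ) (hp : p.Prime)
    (H N : Subgroup G) [N.Normal] (hH : IsPGroup p ↥H) (hIC : IsICPhi H)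
    (hN : ¬ p ∣ Nat.card N) :
    IsICPhi ((H ⊔ N).map (QuotientGroup.mk' N)) := by
  have : Fact p.Prime := ⟨hp⟩
  have hNbot : N.map (QuotientGroup.mk' N) = ⊥ := by
    rw [Subgroup.map_eq_bot_iff, QuotientGroup.ker_mk']
  rw [Subgroup.map_sup, hNbot, sup_bot_eq]
  refine hIC.map (QuotientGroup.mk'_surjective N) ?_
  rw [QuotientGroup.ker_mk']
  exact hH.to_inf_left.le_of_le_sup hN inf_le_right

theorem stmt4 {G : Type*} [Group G] [Finite G] (p : ℕ) (hp : p.Prime)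
    (H N : Subgroup G) [N.Normal] (hH : IsPGroup p ↥H) (hIC : IsICPhi H)
    (hN : ¬ p ∣ Nat.card N) :
    IsICPhi ((H ⊔ N).map (QuotientGroup.mk' N)) :=
  stmt4_general p hp H N hH hIC hN
end

section
/- Let P be a finite p-group for an odd prime p such that every subgroup of P is an ICΦ-subgroup of P. Then P is abelian. -/
open Subgroup
open scoped commutatorElement

section

variable {G : Type*} [Group G] {a b : G} {p : ℕ}

lemma mem_zpowers_zpow_of_not_dvd (hp : p.Prime) {x : G} {k : ℕ}
    (hx : x ^ p ^ k = 1) {s : ℤ} (hs : ¬ (p : ℤ) ∣ s) : x ∈ zpowers (x ^ s) := by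
  obtain ⟨j, -, hj⟩ := (Nat.dvd_prime_pow hp).1 (orderOf_dvd_of_pow_eq_one hx)
  rw [mem_zpowers_zpow_iff, hj, ← Int.isCoprime_iff_gcd_eq_one, Nat.cast_pow]
  exact (((Nat.prime_iff_prime_int.mp hp).coprime_iff_not_dvd.2 hs).symm).pow_right

lemma zpow_pow_comm (g : G) (i : ℤ) (n : ℕ) : (g ^ i) ^ n = (g ^ n) ^ i := by
  rw [← zpow_natCast, zpow_comm, zpow_natCast]

lemma commutatorElement_zpow_left (ha : Commute a ⁅a, b⁆) (i : ℤ) :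
    ⁅a ^ i, b⁆ = ⁅a, b⁆ ^ i := by
  have hconj : b * a ^ i * b⁻¹ = ⁅a, b⁆⁻¹ ^ i * a ^ i := by
    rw [← conj_zpow, show b * a * b⁻¹ = ⁅a, b⁆⁻¹ * a by simp [commutatorElement_def, mul_assoc],
      (ha.symm.inv_left).mul_zpow]
  calc ⁅a ^ i, b⁆ = a ^ i * (b * a ^ i * b⁻¹)⁻¹ := by simp [commutatorElement_def, mul_assoc]
    _ = ⁅a, b⁆ ^ i := by
      rw [hconj, mul_inv_rev, inv_zpow', zpow_neg, inv_inv, mul_inv_cancel_left]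

lemma commutatorElement_pow_left (ha : Commute a ⁅a, b⁆) (n : ℕ) :
    ⁅a ^ n, b⁆ = ⁅a, b⁆ ^ n :=
  mod_cast commutatorElement_zpow_left ha n

lemma commutatorElement_zpow_zpow (ha : Commute a ⁅a, b⁆) (hb : Commute b ⁅a, b⁆)
    (i j : ℤ) : ⁅a ^ i, b ^ j⁆ = ⁅a, b⁆ ^ (i * j) := by
  have hb' : Commute b ⁅b, a ^ i⁆ := by
    rw [← commutatorElement_inv, commutatorElement_zpow_left ha]
    exact (hb.zpow_right i).inv_right
  rw [← commutatorElement_inv, commutatorElement_zpow_left hb', ← commutatorElement_inv,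
    commutatorElement_zpow_left ha, inv_zpow, inv_inv, ← zpow_mul, mul_comm]

lemma mul_pow_of_commute_commutatorElement {u v : G} (hu : Commute u ⁅v, u⁆)
    (hv : Commute v ⁅v, u⁆) (n : ℕ) : (u * v) ^ n = u ^ n * v ^ n * ⁅v, u⁆ ^ n.choose 2 := by
  induction n with
  | zero => simp
  | succ n ih =>
    set c := ⁅v, u⁆
    have hswap : v ^ n * u = c ^ n * u * v ^ n := by
      rw [← commutatorElement_pow_left hv]; group
    have hcu : c ^ n * u = u * c ^ n := (hu.pow_right n).symm.eq
    have hcv : c ^ n * v ^ (n + 1) = v ^ (n + 1) * c ^ n := (hv.pow_pow (n + 1) n).symm.eq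
    calc (u * v) ^ (n + 1) = u ^ n * v ^ n * c ^ n.choose 2 * (u * v) := by rw [pow_succ, ih]
      _ = u ^ n * (v ^ n * u) * v * c ^ n.choose 2 := by
          rw [mul_assoc _ (c ^ _), ((hu.mul_left hv).pow_right _).symm.eq]; group
      _ = u ^ n * (c ^ n * u) * (v ^ n * v) * c ^ n.choose 2 := by rw [hswap]; group
      _ = u ^ (n + 1) * (c ^ n * v ^ (n + 1)) * c ^ n.choose 2 := by
          rw [hcu, ← pow_succ]; group
      _ = u ^ (n + 1) * v ^ (n + 1) * c ^ (n + 1).choose 2 := by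
          rw [hcv, Nat.choose_succ_succ, Nat.choose_one_right, pow_add]; group

lemma commutatorElement_zpow_mul_zpow_left (ha : Commute a ⁅a, b⁆) (hb : Commute b ⁅a, b⁆)
    (i j : ℤ) : ⁅a ^ i * b ^ j, a⁆ = ⁅a, b⁆ ^ (-j) := by
  have hba : ⁅b ^ j, a⁆ = ⁅a, b⁆ ^ (-j) := by
    rw [← commutatorElement_inv, zpow_neg, ← zpow_one a, commutatorElement_zpow_zpow ha hb,
      one_mul, zpow_one]
  rw [commutatorElement_mul_left_eq_conj_mul, hba, ((ha.zpow_zpow i (-j)).eq),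
    mul_inv_cancel_right, commutatorElement_eq_one_iff_commute.2 ((Commute.refl a).zpow_left i),
    mul_one]

lemma commutatorElement_zpow_mul_zpow_right (ha : Commute a ⁅a, b⁆) (i j : ℤ) :
    ⁅a ^ i * b ^ j, b⁆ = ⁅a, b⁆ ^ i := by
  rw [commutatorElement_mul_left_eq_conj_mul,
    commutatorElement_eq_one_iff_commute.2 ((Commute.refl b).zpow_left j), mul_one,
    mul_inv_cancel, one_mul, commutatorElement_zpow_left ha]

lemma zpow_mul_zpow_pow_of_odd (ha : Commute a ⁅a, b⁆) (hb : Commute b ⁅a, b⁆)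
    (hp : p.Prime) (hodd : Odd p) (hcp : ⁅a, b⁆ ^ p = 1) (i j : ℤ) :
    (a ^ i * b ^ j) ^ p = (a ^ p) ^ i * (b ^ p) ^ j := by
  have hd : ⁅b ^ j, a ^ i⁆ = (⁅a, b⁆ ^ (i * j))⁻¹ := by
    rw [← commutatorElement_inv, commutatorElement_zpow_zpow ha hb]
  have h2p : 2 < p := hp.two_le.lt_of_ne (by rintro rfl; exact absurd hodd (by decide))
  have hdp : ⁅b ^ j, a ^ i⁆ ^ p.choose 2 = 1 := by
    obtain ⟨k, hk⟩ := hp.dvd_choose_self two_ne_zero h2p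
    rw [hk, pow_mul, hd, inv_pow, zpow_pow_comm, hcp, one_zpow, inv_one, one_pow]
  rw [mul_pow_of_commute_commutatorElement (by rw [hd]; exact (ha.zpow_zpow i _).inv_right)
    (by rw [hd]; exact (hb.zpow_zpow j _).inv_right), hdp, mul_one, zpow_pow_comm, zpow_pow_comm]

lemma mem_commutator_closure_zpow_mul_zpow (ha : Commute a ⁅a, b⁆) (hb : Commute b ⁅a, b⁆)
    (hp : p.Prime) (hcp : ⁅a, b⁆ ^ p = 1) {i j : ℤ} (hij : ¬((p : ℤ) ∣ i ∧ (p : ℤ) ∣ j)) :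
    ⁅a, b⁆ ∈ ⁅closure {a ^ i * b ^ j, ⁅a, b⁆}, (⊤ : Subgroup G)⁆ := by
  set H := closure {a ^ i * b ^ j, ⁅a, b⁆}
  have hx : a ^ i * b ^ j ∈ H := subset_closure (Set.mem_insert _ _)
  have hgen : ∀ s : ℤ, ¬ (p : ℤ) ∣ s → ⁅a, b⁆ ^ s ∈ ⁅H, ⊤⁆ → ⁅a, b⁆ ∈ ⁅H, ⊤⁆ :=
    fun s hs h ↦ zpowers_le.2 h (mem_zpowers_zpow_of_not_dvd hp (k := 1) (by rwa [pow_one]) hs)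
  by_cases hi : (p : ℤ) ∣ i
  · refine hgen (-j) (by rw [dvd_neg]; exact fun hj ↦ hij ⟨hi, hj⟩) ?_
    rw [← commutatorElement_zpow_mul_zpow_left ha hb i j]
    exact commutator_mem_commutator hx (mem_top a)
  · refine hgen i hi ?_
    rw [← commutatorElement_zpow_mul_zpow_right ha i j]
    exact commutator_mem_commutator hx (mem_top b)

lemma le_of_le_sup_map_frattini [Finite G] {H K : Subgroup G} (hKH : K ≤ H)
    (h : H ≤ K ⊔ (frattini H).map H.subtype) : H ≤ K := by
  rw [← subgroupOf_eq_top]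
  apply frattini_nongenerating
  rw [eq_top_iff, ← map_le_map_iff_of_injective H.subtype_injective, Subgroup.map_sup,
    subgroupOf_map_subtype, ← MonoidHom.range_eq_map, range_subtype, inf_eq_left.2 hKH]
  exact h

lemma mem_zpowers_pow_of_mem_frattini [Finite G] (hp : p.Prime) {x c : G} {k : ℕ}
    (hx : x ^ p ^ k = 1) (hc : c ≠ 1)
    (hΦ : c ∈ (frattini (closure {x, c})).map (closure {x, c}).subtype) :
    c ∈ zpowers (x ^ p) := by
  set H := closure {x, c}
  set Φ := (frattini H).map H.subtype
  have hxH : x ∈ H := subset_closure (Set.mem_insert x _)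
  have hcx : c ∈ zpowers x := by
    refine le_of_le_sup_map_frattini (zpowers_le.2 hxH) ?_ (subset_closure (by simp))
    rw [closure_le]
    rintro _ (rfl | rfl)
    exacts [mem_sup_left (mem_zpowers _), mem_sup_right hΦ]
  obtain ⟨e, rfl⟩ := mem_zpowers_iff.1 hcx
  by_cases hpe : (p : ℤ) ∣ e
  · obtain ⟨f, rfl⟩ := hpe
    exact ⟨f, by simp [zpow_mul]⟩
  · -- otherwise `x` is a power of `c`, so `H ≤ Φ(H)` and `H` is trivial
    have hHΦ : H ≤ ⊥ ⊔ Φ := by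
      rw [bot_sup_eq, closure_le]
      rintro _ (rfl | rfl)
      exacts [zpowers_le.2 hΦ (mem_zpowers_zpow_of_not_dvd hp hx hpe), hΦ]
    exact (hc (mem_bot.1 (le_of_le_sup_map_frattini bot_le hHΦ (subset_closure (by simp))))).elim

lemma IsICPhi.of_map_subtype {K : Subgroup G} {H : Subgroup K}
    (h : IsICPhi (H.map K.subtype)) : IsICPhi H := by
  rintro y ⟨hyH, hy⟩
  have hy' : (y : G) ∈ H.map K.subtype ⊓ ⁅H.map K.subtype, ⊤⁆ :=
    ⟨mem_map_of_mem _ hyH, commutator_mono le_rfl le_top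
      (map_commutator H ⊤ K.subtype ▸ mem_map_of_mem _ hy)⟩
  obtain ⟨z, hz, hzy⟩ := h hy'
  let e := H.equivMapOfInjective K.subtype K.subtype_injective
  refine ⟨e.symm z, frattini_le_comap_frattini_of_surjective (φ := e.symm.toMonoidHom)
    e.symm.surjective hz, K.subtype_injective ?_⟩
  rw [coe_subtype, ← hzy]
  exact congrArg Subtype.val (e.apply_symm_apply z)

lemma IsPGroup.pow_mem_of_isCoatom (hp : p.Prime) (hG : IsPGroup p G) {M : Subgroup G}
    [M.Normal] (hM : IsCoatom M) (g : G) : g ^ p ∈ M := by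
  by_contra hg
  have hsup : M ⊔ zpowers (g ^ p) = ⊤ :=
    hM.2 _ (left_lt_sup.2 fun h ↦ hg (zpowers_le.1 h))
  obtain ⟨y, hyM, z, hz, hyz⟩ := mem_sup_of_normal_left.1 (hsup ▸ mem_top g)
  obtain ⟨k, rfl⟩ := mem_zpowers_iff.1 hz
  have hy : y = g ^ (1 - p * k) := by
    rw [zpow_sub, zpow_one, zpow_mul, zpow_natCast, eq_mul_inv_iff_mul_eq, hyz]
  have hndvd : ¬ (p : ℤ) ∣ 1 - p * k := by
    rw [← dvd_add_left (dvd_mul_right _ k), sub_add_cancel]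
    exact_mod_cast hp.not_dvd_one
  obtain ⟨n, hn⟩ := hG g
  exact hg (pow_mem (zpowers_le.2 (hy ▸ hyM) (mem_zpowers_zpow_of_not_dvd hp hn hndvd)) p)

lemma commute_commutatorElement_and_pow [Finite G] (hp : p.Prime) (hG : IsPGroup p G)
    (hmin : ∀ K : Subgroup G, K ≠ ⊤ → ∀ x ∈ K, ∀ y ∈ K, Commute x y) (a b : G) :
    Commute a ⁅a, b⁆ ∧ Commute a (b ^ p) := by
  obtain htop | ⟨M, hM, haM⟩ := eq_top_or_exists_le_coatom (zpowers a)
  · have hcomm : ∀ g : G, Commute a g := fun g ↦ by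
      obtain ⟨k, rfl⟩ := mem_zpowers_iff.1 (htop ▸ mem_top g)
      exact (Commute.refl a).zpow_right k
    exact ⟨hcomm _, hcomm _⟩
  have := Fact.mk hp
  have := hG.isNilpotent
  have : M.Normal := Group.normalizerCondition_of_isNilpotent.normal_of_coatom M hM
  have ha : a ∈ M := haM (mem_zpowers a)
  have hab : ⁅a, b⁆ ∈ M := by
    rw [commutatorElement_def, mul_assoc, mul_assoc, ← mul_assoc b]
    exact mul_mem ha (Normal.conj_mem ‹_› _ (inv_mem ha) b)
  exact ⟨hmin M hM.1 _ ha _ hab, hmin M hM.1 _ ha _ (hG.pow_mem_of_isCoatom hp hM b)⟩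

lemma zpowers_eq_zpowers_pow_of_mem_zpowers (hp : p.Prime) {A c : G} {m : ℕ}
    (hA : orderOf A = p ^ (m + 1)) (hcA : c ∈ zpowers A) (hc : c ≠ 1) (hcp : c ^ p = 1) :
    zpowers c = zpowers (A ^ p ^ m) := by
  obtain ⟨e, rfl⟩ := mem_zpowers_iff.1 hcA
  have hAp : (A ^ p ^ m) ^ p = 1 := by rw [← pow_mul, ← pow_succ, ← hA, pow_orderOf_eq_one]
  have hdvd : ((p ^ m : ℕ) : ℤ) ∣ e := by
    have h : ((p ^ (m + 1) : ℕ) : ℤ) ∣ e * p := by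
      rw [← hA, orderOf_dvd_iff_zpow_eq_one, zpow_mul, zpow_natCast, hcp]
    rw [pow_succ, Nat.cast_mul] at h
    exact (mul_dvd_mul_iff_right (by exact_mod_cast hp.ne_zero)).1 h
  obtain ⟨f, rfl⟩ := hdvd
  rw [zpow_mul, zpow_natCast] at hc ⊢
  have hf : ¬ (p : ℤ) ∣ f := by
    rintro ⟨g, rfl⟩
    exact hc (by rw [zpow_mul, zpow_natCast, hAp, one_zpow])
  refine le_antisymm (zpowers_le.2 (zpow_mem (mem_zpowers _) f)) (zpowers_le.2 ?_)
  exact mem_zpowers_zpow_of_not_dvd hp (k := 1) (by rwa [pow_one]) hf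

lemma exists_orderOf_mul_zpow_lt (hp : p.Prime) {A B c : G} {m n : ℕ} (hAB : Commute A B)
    (hA : orderOf A = p ^ (m + 1)) (hB : orderOf B = p ^ (n + 1)) (hmn : m ≤ n)
    (hcA : c ∈ zpowers A) (hcB : c ∈ zpowers B) (hc : c ≠ 1) (hcp : c ^ p = 1) :
    ∃ t : ℤ, orderOf (A * B ^ t) < orderOf A := by
  obtain ⟨k, rfl⟩ := Nat.exists_eq_add_of_le hmn
  have hAB' : A ^ p ^ m ∈ zpowers (B ^ p ^ (m + k)) := by
    rw [← zpowers_eq_zpowers_pow_of_mem_zpowers hp hB hcB hc hcp,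
      zpowers_eq_zpowers_pow_of_mem_zpowers hp hA hcA hc hcp]
    exact mem_zpowers _
  obtain ⟨s, hs⟩ := mem_zpowers_iff.1 hAB'
  refine ⟨-(p ^ k * s), ?_⟩
  have hBt : (B ^ (-(p ^ k * s) : ℤ)) ^ p ^ m = ((B ^ p ^ (m + k)) ^ s)⁻¹ := by
    rw [← zpow_natCast, ← zpow_mul, ← zpow_natCast B, ← zpow_mul, ← zpow_neg]
    congr 1
    push_cast
    ring
  have hpow : (A * B ^ (-(p ^ k * s) : ℤ)) ^ p ^ m = 1 := by
    rw [(hAB.zpow_right _).mul_pow, hBt, hs, mul_inv_cancel]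
  calc orderOf (A * B ^ (-(p ^ k * s) : ℤ)) ≤ p ^ m :=
        Nat.le_of_dvd (pow_pos hp.pos _) (orderOf_dvd_of_pow_eq_one hpow)
    _ < orderOf A := by rw [hA]; exact Nat.pow_lt_pow_right hp.one_lt (lt_add_one m)

theorem exists_notMem_zpowers_zpow_mul_zpow (hp : p.Prime) (hG : IsPGroup p G) {A B c : G}
    (hAB : Commute A B) (hc : c ≠ 1) (hcp : c ^ p = 1) :
    ∃ i j : ℤ, ¬((p : ℤ) ∣ i ∧ (p : ℤ) ∣ j) ∧ c ∉ zpowers (A ^ i * B ^ j) := by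
  have := Fact.mk hp
  have hp1 : ¬ (p : ℤ) ∣ 1 := by exact_mod_cast hp.not_dvd_one
  have hord : ∀ D : G, c ∈ zpowers D → ∃ m, orderOf D = p ^ (m + 1) := fun D hcD ↦ by
    obtain ⟨_ | m, hm⟩ := IsPGroup.iff_orderOf.1 hG D
    · rw [pow_zero, orderOf_eq_one_iff] at hm
      exact absurd (by simpa [hm] using hcD) hc
    · exact ⟨m, hm⟩
  by_contra! h
  induction hN : orderOf A + orderOf B using Nat.strong_induction_on generalizing A B with
  | _ N ih =>
  wlog hle : orderOf A ≤ orderOf B generalizing A B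
  · refine this hAB.symm (fun i j hij ↦ ?_) (by omega) (by omega)
    rw [← (hAB.zpow_zpow j i).eq]
    exact h j i (by tauto)
  have hcA : c ∈ zpowers A := by simpa using h 1 0 (by simp [hp1])
  have hcB : c ∈ zpowers B := by simpa using h 0 1 (by simp [hp1])
  obtain ⟨m, hm⟩ := hord A hcA
  obtain ⟨n, hn⟩ := hord B hcB
  have hmn : m ≤ n := by
    rwa [hm, hn, Nat.pow_le_pow_iff_right hp.one_lt, add_le_add_iff_right] at hle
  obtain ⟨t, ht⟩ := exists_orderOf_mul_zpow_lt hp hAB hm hn hmn hcA hcB hc hcp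
  refine ih _ (by omega) (hAB.mul_left ((Commute.refl B).zpow_left t)) (fun i j hij ↦ ?_) rfl
  rw [(hAB.zpow_right t).mul_zpow, mul_assoc, ← zpow_mul, ← zpow_add]
  refine h i (t * i + j) fun hi hj ↦ hij hi ?_
  simpa using dvd_sub hj (hi.mul_left t)

theorem commute_of_forall_ne_top_commute [Finite G] (hp : p.Prime) (hodd : Odd p)
    (hG : IsPGroup p G) (hIC : ∀ H : Subgroup G, IsICPhi H)
    (hmin : ∀ K : Subgroup G, K ≠ ⊤ → ∀ x ∈ K, ∀ y ∈ K, Commute x y) (a b : G) :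
    Commute a b := by
  by_contra hab
  have hc : ⁅a, b⁆ ≠ 1 := mt commutatorElement_eq_one_iff_commute.1 hab
  obtain ⟨ha, -⟩ := commute_commutatorElement_and_pow hp hG hmin a b
  obtain ⟨hb, hba⟩ := commute_commutatorElement_and_pow hp hG hmin b a
  rw [← commutatorElement_inv, Commute.inv_right_iff] at hb
  have hcp : ⁅a, b⁆ ^ p = 1 := by
    rw [← commutatorElement_pow_left ha, commutatorElement_eq_one_iff_commute]
    exact hba.symm
  obtain ⟨i, j, hij, hcx⟩ :=
    exists_notMem_zpowers_zpow_mul_zpow hp hG (hba.symm.pow_right p) hc hcp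
  obtain ⟨k, hk⟩ := hG (a ^ i * b ^ j)
  have hΦ := hIC (closure {a ^ i * b ^ j, ⁅a, b⁆})
    ⟨subset_closure (Set.mem_insert_of_mem _ rfl),
      mem_commutator_closure_zpow_mul_zpow ha hb hp hcp hij⟩
  rw [← zpow_mul_zpow_pow_of_odd ha hb hp hodd hcp] at hcx
  exact hcx (mem_zpowers_pow_of_mem_frattini hp hk hc hΦ)

theorem commute_of_forall_isICPhi [Finite G] (hp : p.Prime) (hodd : Odd p)
    (hG : IsPGroup p G) (hIC : ∀ H : Subgroup G, IsICPhi H) (a b : G) :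
    Commute a b := by
  induction hN : Nat.card G using Nat.strong_induction_on generalizing G with
  | _ N ih =>
  refine commute_of_forall_ne_top_commute hp hodd hG hIC (fun K hK x hx y hy ↦ ?_) a b
  have hlt : Nat.card K < N :=
    hN ▸ (card_le_card_group K).lt_of_ne (mt (eq_top_of_card_eq K) hK)
  exact (ih _ hlt (hG.to_subgroup K) (fun H ↦ (hIC _).of_map_subtype) ⟨x, hx⟩ ⟨y, hy⟩ rfl).map
    K.subtype

end

theorem stmt7 {P : Type*} [Group P] [Finite P] (p : ℕ) (hp : p.Prime)
    (hodd : Odd p) (hPgrp : IsPGroup p P)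
    (hIC : ∀ H : Subgroup P, IsICPhi H) : ∀ a b : P, a * b = b * a :=
  fun a b ↦ commute_of_forall_isICPhi hp hodd hPgrp hIC a b
end

section
/- Let p be a prime and P a normal p-subgroup of a finite group G such that G/C_G(P) is a p-group. Then P is contained in the hypercenter Z∞(G). -/
/-!
The image of `G` in `Aut P` is isomorphic to `G / C_G(P)`, hence a `p`-group, and its fixed points
on `P` are exactly the elements of `P` central in `G`. Counting fixed points modulo `p` shows that a
nontrivial `P` meets `Z(G)` nontrivially. The hypotheses pass to the image of `P` in `G / Z(G)`, so
induction on `|G|` puts that image in some `Z_n(G / Z(G))`, i.e. `P ≤ Z_{n+1}(G)`.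
-/

namespace Subgroup

variable {G G' : Type*} [Group G] [Group G']

theorem ker_conjNormal (H : Subgroup G) [H.Normal] :
    (MulAut.conjNormal : G →* MulAut H).ker = centralizer (H : Set G) := by
  ext g
  simp only [MonoidHom.mem_ker, MulEquiv.ext_iff, MulAut.one_apply, Subtype.ext_iff,
    MulAut.conjNormal_apply, mem_centralizer_iff, Subtype.forall, SetLike.mem_coe,
    mul_inv_eq_iff_eq_mul]
  exact forall₂_congr fun _ _ => eq_comm

theorem index_centralizer_map_dvd {f : G →* G'} (hf : Function.Surjective f) (H : Subgroup G) :
    (centralizer (H.map f : Set G')).index ∣ (centralizer (H : Set G)).index :=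
  (index_dvd_of_le (by simpa using map_centralizer_le_centralizer_image (H : Set G) f)).trans
    (index_map_dvd _ hf)

variable {p : ℕ} [Fact p.Prime]

theorem inf_center_ne_bot_of_isPGroup {P : Subgroup G} [P.Normal] [Finite P]
    (hP : IsPGroup p P) (hPne : P ≠ ⊥) (hC : ∃ k, (centralizer (P : Set G)).index = p ^ k) :
    P ⊓ center G ≠ ⊥ := by
  let φ : G →* MulAut P := MulAut.conjNormal
  have hφ : IsPGroup p φ.range := by
    obtain ⟨k, hk⟩ := hC
    exact IsPGroup.of_card (n := k) (by rw [← index_ker, ker_conjNormal, hk])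
  have hpP : p ∣ Nat.card P := by
    have := (nontrivial_iff_ne_bot P).mpr hPne
    obtain ⟨n, hn, hcard⟩ := hP.nontrivial_iff_card.mp this
    exact hcard ▸ dvd_pow_self p hn.ne'
  have hone : (1 : P) ∈ MulAction.fixedPoints φ.range P := fun g => map_one (g : MulAut P)
  obtain ⟨b, hb, hb1⟩ := hφ.exists_fixed_point_of_prime_dvd_card_of_fixed_point P hpP hone
  have hbcenter : (b : G) ∈ center G := mem_center_iff.mpr fun g =>
    mul_inv_eq_iff_eq_mul.mp (congrArg Subtype.val (hb ⟨φ g, g, rfl⟩))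
  exact ne_bot_iff_exists_ne_one.mpr ⟨⟨b, b.2, hbcenter⟩, fun h => hb1 (by
    ext; exact (congrArg Subtype.val h).symm)⟩

theorem exists_le_upperCentralSeries_of_isPGroup [Finite G] {P : Subgroup G} [P.Normal]
    (hP : IsPGroup p P) (hC : ∃ k, (centralizer (P : Set G)).index = p ^ k) :
    ∃ n, P ≤ upperCentralSeries G n := by
  induction h : Nat.card G using Nat.strong_induction_on generalizing G with
  | _ N ih =>
  rcases eq_or_ne P ⊥ with rfl | hPne
  · exact ⟨0, bot_le⟩
  have hZ : center G ≠ ⊥ :=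
    ne_bot_of_le_ne_bot (inf_center_ne_bot_of_isPGroup hP hPne hC) inf_le_right
  have hcard : Nat.card (G ⧸ center G) < N := h ▸ by
    rw [card_eq_card_quotient_mul_card_subgroup (center G)]
    exact lt_mul_of_one_lt_right Nat.card_pos ((one_lt_card_iff_ne_bot _).mpr hZ)
  let f := QuotientGroup.mk' (center G)
  have hf : Function.Surjective f := QuotientGroup.mk'_surjective _
  have : (P.map f).Normal := Normal.map ‹_› f hf
  have hC' : ∃ k, (centralizer (P.map f : Set (G ⧸ center G))).index = p ^ k := by
    obtain ⟨k, hk⟩ := hC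
    obtain ⟨j, -, hj⟩ := (Nat.dvd_prime_pow Fact.out).mp (hk ▸ index_centralizer_map_dvd hf P)
    exact ⟨j, hj⟩
  obtain ⟨n, hn⟩ := ih _ hcard (hP.map f) hC' rfl
  refine ⟨n + 1, ?_⟩
  rw [← comap_upperCentralSeries_quotient_center]
  exact map_le_iff_le_comap.mp hn

end Subgroup

theorem stmt17 {G : Type*} [Group G] [Finite G] (p : ℕ) (hp : p.Prime)
    (P : Subgroup G) [P.Normal] (hPgrp : IsPGroup p ↥P)
    (hquot : ∃ k : ℕ, (Subgroup.centralizer (P : Set G)).index = p ^ k) :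
    P ≤ ⨆ n : ℕ, upperCentralSeries G n := by
  have : Fact p.Prime := ⟨hp⟩
  obtain ⟨n, hn⟩ := Subgroup.exists_le_upperCentralSeries_of_isPGroup hPgrp hquot
  exact le_iSup_of_le n hn
end
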